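/- arXiv:1704.07144 — 2 statements merged into one kernel-verified Lean document; each statement's English description precedes it below -/
import Mathlib

section
/- Let r ≥ 2 be an integer, let λ > 0, let ε > 0, set b_c = (1 - 1/r)·((r-1)!/λ)^{1/(r-1)}, and suppose a ≥ (1+ε)·b_c. Define the sequence x_0 = a and x_{t+1} = λ·x_t^r/r! + a for t ≥ 0. Then x_t → ∞ as t → ∞. -/
/-!
With `c = ((r-1)!/λ)^{1/(r-1)}` we have `λ y^r / r! = y^r / (r c^{r-1})` and `b_c = (1 - 1/r) c`.
The convex map `y ↦ y^r / (r c^{r-1})` has slope `1` at `y = c`, so it lies above its tangent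
`y - b_c` there (Bernoulli's inequality). Hence every step of the recursion adds at least
`a - b_c ≥ ε b_c > 0`, and `x_t ≥ a + t (a - b_c)`.
-/

open Filter

/-- The critical value `b_c = (1 - 1/r) · ((r-1)!/λ)^(1/(r-1))` for the one-step
infection recursion `f(x) = λ x^r / r! + a` of bootstrap percolation. -/
noncomputable def bcrit (r : ℕ) (lam : ℝ) : ℝ :=
  (1 - 1 / (r : ℝ)) * (((r - 1).factorial : ℝ) / lam) ^ ((1 : ℝ) / ((r : ℝ) - 1))

lemma le_pow_div_mul_pow_pred_add {n : ℕ} (hn : n ≠ 0) {c y : ℝ} (hc : 0 < c) (hy : 0 ≤ y) :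
    y ≤ y ^ n / (n * c ^ (n - 1)) + (1 - 1 / n) * c := by
  have hpow : c ^ n = c ^ (n - 1) * c := by rw [← pow_succ, Nat.sub_add_cancel (by omega)]
  have bernoulli : 1 + n * (y / c - 1) ≤ (y / c) ^ n := by
    simpa using one_add_mul_le_pow (by linarith [div_nonneg hy hc.le] : -2 ≤ y / c - 1) n
  calc y = c / n * (1 + n * (y / c - 1)) + (1 - 1 / n) * c := by field_simp; ring
    _ ≤ c / n * (y / c) ^ n + (1 - 1 / n) * c := by gcongr
    _ = y ^ n / (n * c ^ (n - 1)) + (1 - 1 / n) * c := by rw [div_pow, hpow]; field_simp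

lemma rpow_one_div_sub_one_pow_pred {r : ℕ} (hr : 2 ≤ r) {z : ℝ} (hz : 0 ≤ z) :
    (z ^ ((1 : ℝ) / ((r : ℝ) - 1))) ^ (r - 1) = z := by
  have hcast : ((r - 1 : ℕ) : ℝ) = (r : ℝ) - 1 := by
    rw [Nat.cast_sub (by omega), Nat.cast_one]
  rw [← hcast, one_div]
  exact Real.rpow_inv_natCast_pow hz (by omega)

lemma bcrit_pos {r : ℕ} (hr : 2 ≤ r) {lam : ℝ} (hlam : 0 < lam) : 0 < bcrit r lam := by
  have hr' : (2 : ℝ) ≤ r := by exact_mod_cast hr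
  have : 1 / (r : ℝ) < 1 := by rw [div_lt_one (by linarith)]; linarith
  unfold bcrit
  exact mul_pos (by linarith) (Real.rpow_pos_of_pos (by positivity) _)

lemma le_infection_step_add_bcrit {r : ℕ} (hr : 2 ≤ r) {lam : ℝ} (hlam : 0 < lam) {y : ℝ}
    (hy : 0 ≤ y) : y ≤ lam * y ^ r / r.factorial + bcrit r lam := by
  set c := (((r - 1).factorial : ℝ) / lam) ^ ((1 : ℝ) / ((r : ℝ) - 1))
  have hc : 0 < c := Real.rpow_pos_of_pos (by positivity) _
  have hcr : c ^ (r - 1) = (r - 1).factorial / lam :=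
    rpow_one_div_sub_one_pow_pred hr (by positivity)
  have hstep : lam * y ^ r / r.factorial = y ^ r / (r * c ^ (r - 1)) := by
    rw [hcr, ← Nat.mul_factorial_pred (by omega : r ≠ 0), Nat.cast_mul]
    field_simp
  rw [hstep]
  exact le_pow_div_mul_pow_pred_add (by omega) hc hy

lemma add_mul_le_of_forall_add_le {f : ℝ → ℝ} {δ : ℝ} (hδ : 0 ≤ δ)
    (hf : ∀ y, 0 ≤ y → y + δ ≤ f y) {x : ℕ → ℝ} (hx0 : 0 ≤ x 0)
    (hxs : ∀ t, x (t + 1) = f (x t)) (t : ℕ) : x 0 + t * δ ≤ x t := by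
  induction t with
  | zero => simp
  | succ t ih =>
    have hxt : 0 ≤ x t := by nlinarith [Nat.cast_nonneg (α := ℝ) t]
    rw [hxs, Nat.cast_succ]
    linarith [hf _ hxt]

/-- **Supercritical recursion diverges.** If `a ≥ (1+ε) b_c` with `ε > 0`, then the
recursion `x₀ = a`, `x_{t+1} = λ x_t^r / r! + a` tends to infinity. -/
theorem infection_recursion_supercritical_diverges
    (r : ℕ) (hr : 2 ≤ r) (lam : ℝ) (hlam : 0 < lam) (ε : ℝ) (hε : 0 < ε)
    (a : ℝ) (hsup : (1 + ε) * bcrit r lam ≤ a)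
    (x : ℕ → ℝ) (hx0 : x 0 = a)
    (hxs : ∀ t, x (t + 1) = lam * (x t) ^ r / (r.factorial : ℝ) + a) :
    Tendsto x atTop atTop := by
  have hB := bcrit_pos hr hlam
  have hgap : 0 < a - bcrit r lam := by nlinarith
  have hgrowth : ∀ t : ℕ, x 0 + t * (a - bcrit r lam) ≤ x t :=
    add_mul_le_of_forall_add_le (f := fun y => lam * y ^ r / r.factorial + a) hgap.le
      (fun y hy => by linarith [le_infection_step_add_bcrit hr hlam hy]) (by linarith) hxs
  refine tendsto_atTop_mono hgrowth (tendsto_atTop_add_const_left _ _ ?_)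
  exact tendsto_natCast_atTop_atTop.atTop_mul_const hgap
end

section
/- Let r ≥ 2 be an integer, let λ > 0, let ε > 0, set b_c = (1 - 1/r)·((r-1)!/λ)^{1/(r-1)}, and suppose a ≥ (1+ε)·b_c. Define x_0 = a, x_{t+1} = λ·x_t^r/r! + a, and Δ(t) = x_{t+1} - x_t. Then there exists t_2 = t_2(r,ε), depending only on r and ε (and not on λ or a), such that Δ(t+1) > 2·Δ(t) for all t ≥ t_2; in particular Δ(t) grows at least geometrically from time t_2 on. -/
/-!
Write `f u = λ u^r / r!` and `c = ((r-1)!/λ)^(1/(r-1))`, the point where `f' c = 1`, so that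
`b_c = (1 - 1/r) c`. By convexity `f` lies above its tangent lines. The tangent at `c` gives
`f u - u ≥ -b_c`, so every round infects at least `a - b_c ≥ ε b_c ≥ ε c / 2` new vertices and
`x_t > 2c` once `t ≥ 4/ε`. The tangent at `x_t` gives `Δ(t+1) ≥ f' (x_t) Δ(t)`, and
`f' (x_t) > f' (2c) = 2^(r-1) ≥ 2`.
-/

open Filter

open Nat

noncomputable def critScale (r : ℕ) (lam : ℝ) : ℝ :=
  (((r - 1)! : ℝ) / lam) ^ ((1 : ℝ) / ((r : ℝ) - 1))

lemma bcrit_eq_mul_critScale (r : ℕ) (lam : ℝ) :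
    bcrit r lam = (1 - 1 / (r : ℝ)) * critScale r lam := rfl

lemma critScale_nonneg (r : ℕ) {lam : ℝ} (hlam : 0 ≤ lam) : 0 ≤ critScale r lam := by
  unfold critScale; positivity

lemma critScale_pos (r : ℕ) {lam : ℝ} (hlam : 0 < lam) : 0 < critScale r lam := by
  unfold critScale; positivity

lemma mul_critScale_pow {r : ℕ} (hr : 2 ≤ r) {lam : ℝ} (hlam : 0 < lam) :
    lam * critScale r lam ^ (r - 1) = (r - 1)! := by
  have hexp : (1 : ℝ) / ((r : ℝ) - 1) = ((r - 1 : ℕ) : ℝ)⁻¹ := by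
    rw [one_div, Nat.cast_sub (by omega : 1 ≤ r), Nat.cast_one]
  rw [critScale, hexp, Real.rpow_inv_natCast_pow (by positivity) (by omega)]
  field_simp

lemma critScale_le_two_mul_bcrit {r : ℕ} (hr : 2 ≤ r) {lam : ℝ} (hlam : 0 ≤ lam) :
    critScale r lam ≤ 2 * bcrit r lam := by
  have hc := critScale_nonneg r hlam
  have h : (1 : ℝ) / r ≤ 1 / 2 := by gcongr; exact_mod_cast hr
  rw [bcrit_eq_mul_critScale]
  nlinarith

lemma pow_div_factorial_tangent_le {r : ℕ} (hr : 1 ≤ r) {lam s u : ℝ} (hlam : 0 ≤ lam)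
    (hs : 0 ≤ s) (hsu : 0 ≤ s + u) :
    lam * s ^ r / r ! + lam * s ^ (r - 1) / (r - 1)! * (u - s) ≤ lam * u ^ r / r ! := by
  have hbern := pow_add_mul_le_add_pow hs (by linarith : 0 ≤ 2 * s + (u - s)) r
  rw [add_sub_cancel] at hbern
  have hfac : (r ! : ℝ) = r * (r - 1)! := by exact_mod_cast (mul_factorial_pred (by omega)).symm
  have hr0 : (r : ℝ) ≠ 0 := by norm_cast; omega
  calc lam * s ^ r / r ! + lam * s ^ (r - 1) / (r - 1)! * (u - s)
      = lam / r ! * (s ^ r + r * s ^ (r - 1) * (u - s)) := by rw [hfac]; field_simp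
    _ ≤ lam / r ! * u ^ r := by gcongr
    _ = lam * u ^ r / r ! := by ring

lemma sub_bcrit_le_pow_div_factorial {r : ℕ} (hr : 2 ≤ r) {lam u : ℝ} (hlam : 0 < lam)
    (hu : 0 ≤ u) : u - bcrit r lam ≤ lam * u ^ r / r ! := by
  set c := critScale r lam
  have hc : 0 < c := critScale_pos r hlam
  have hslope : lam * c ^ (r - 1) / (r - 1)! = 1 := by
    rw [mul_critScale_pow hr hlam]; field_simp
  have hvalue : lam * c ^ r / r ! = c / r := by
    have hfac : (r ! : ℝ) = r * (r - 1)! := by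
      exact_mod_cast (mul_factorial_pred (by omega)).symm
    rw [← mul_pow_sub_one (by omega) c, mul_left_comm, mul_critScale_pow hr hlam, hfac]
    field_simp
  have htangent :=
    pow_div_factorial_tangent_le (by omega : 1 ≤ r) hlam.le hc.le (by linarith : 0 ≤ c + u)
  rw [hslope, hvalue] at htangent
  rw [bcrit_eq_mul_critScale, sub_mul, one_mul, one_div_mul_eq_div]
  linarith

lemma two_lt_mul_pow_div_factorial {r : ℕ} (hr : 2 ≤ r) {lam u : ℝ} (hlam : 0 < lam)
    (hu : 2 * critScale r lam < u) : 2 < lam * u ^ (r - 1) / (r - 1)! := by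
  have hc := critScale_pos r hlam
  have htwo : (2 : ℝ) ≤ 2 ^ (r - 1) := le_self_pow₀ (by norm_num) (by omega)
  have hpow : (2 * critScale r lam) ^ (r - 1) < u ^ (r - 1) :=
    pow_lt_pow_left₀ hu (by positivity) (by omega)
  rw [lt_div_iff₀ (by positivity)]
  calc 2 * ((r - 1)! : ℝ) ≤ 2 ^ (r - 1) * (lam * critScale r lam ^ (r - 1)) := by
        rw [mul_critScale_pow hr hlam]; gcongr
    _ = lam * (2 * critScale r lam) ^ (r - 1) := by ring
    _ < lam * u ^ (r - 1) := by gcongr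

lemma add_mul_le_of_forall_add_le_succ {x : ℕ → ℝ} {δ : ℝ} (hδ : 0 ≤ δ) (h0 : 0 ≤ x 0)
    (hstep : ∀ t, 0 ≤ x t → x t + δ ≤ x (t + 1)) (t : ℕ) : x 0 + t * δ ≤ x t := by
  induction t with
  | zero => simp
  | succ t ih =>
    have := hstep t (by nlinarith [t.cast_nonneg (α := ℝ)])
    push_cast
    linarith

section Recursion

variable {r : ℕ} {lam a : ℝ} {x : ℕ → ℝ}
  (hrec : ∀ t, x (t + 1) = lam * x t ^ r / r ! + a)
include hrec

lemma sub_bcrit_le_increment (hr : 2 ≤ r) (hlam : 0 < lam) {t : ℕ} (hxt : 0 ≤ x t) :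
    a - bcrit r lam ≤ x (t + 1) - x t := by
  have := sub_bcrit_le_pow_div_factorial hr hlam hxt
  rw [hrec t]
  linarith

lemma mul_increment_le_increment_succ (hr : 1 ≤ r) (hlam : 0 ≤ lam) {t : ℕ} (hxt : 0 ≤ x t)
    (hxt' : 0 ≤ x (t + 1)) :
    lam * x t ^ (r - 1) / (r - 1)! * (x (t + 1) - x t) ≤ x (t + 2) - x (t + 1) := by
  have := pow_div_factorial_tangent_le hr hlam hxt (by linarith : 0 ≤ x t + x (t + 1))
  rw [show t + 2 = t + 1 + 1 from rfl, hrec (t + 1)]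
  linarith [hrec t]

end Recursion

/-- **Increments of the supercritical recursion eventually double.** If
`a ≥ (1+ε) b_c` and `x₀ = a`, `x_{t+1} = λ x_t^r / r! + a`, `Δ(t) = x_{t+1} - x_t`,
then there is `t₂ = t₂(r,ε)`, depending only on `r` and `ε` (not on `λ` or `a`),
such that `Δ(t+1) > 2 Δ(t)` for all `t ≥ t₂`; in particular `Δ(t)` grows at least
geometrically from time `t₂` on. -/
theorem infection_recursion_supercritical_doubling
    (r : ℕ) (hr : 2 ≤ r) (ε : ℝ) (hε : 0 < ε) :
    ∃ t₂ : ℕ, ∀ lam a : ℝ, 0 < lam → (1 + ε) * bcrit r lam ≤ a →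
      ∀ x : ℕ → ℝ, x 0 = a →
        (∀ t, x (t + 1) = lam * (x t) ^ r / (r.factorial : ℝ) + a) →
        ∀ t, t₂ ≤ t → 2 * (x (t + 1) - x t) < x (t + 2) - x (t + 1) := by
  refine ⟨⌈4 / ε⌉₊, fun lam a hlam ha x hx0 hrec t ht => ?_⟩
  have hc := critScale_le_two_mul_bcrit hr hlam.le
  have hc0 := critScale_pos r hlam
  have hb : 0 < bcrit r lam := by linarith
  have hεb : 0 < ε * bcrit r lam := mul_pos hε hb
  have hstep : ∀ s, 0 ≤ x s → x s + ε * bcrit r lam ≤ x (s + 1) := fun s hxs => by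
    linarith [sub_bcrit_le_increment hrec hr hlam hxs]
  have hlow := add_mul_le_of_forall_add_le_succ hεb.le (by linarith) hstep
  have ht' : 4 ≤ t * ε := (div_le_iff₀ hε).mp ((Nat.le_ceil _).trans (by exact_mod_cast ht))
  have hxt : 2 * critScale r lam < x t := by nlinarith [hlow t]
  have hΔ : 0 < x (t + 1) - x t := by linarith [hstep t (by linarith)]
  calc 2 * (x (t + 1) - x t)
      < lam * x t ^ (r - 1) / (r - 1)! * (x (t + 1) - x t) :=
        mul_lt_mul_of_pos_right (two_lt_mul_pow_div_factorial hr hlam hxt) hΔ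
    _ ≤ x (t + 2) - x (t + 1) :=
        mul_increment_le_increment_succ hrec (by omega) hlam.le (by linarith) (by linarith)
end
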